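/- For every real m > 0 and x ≥ 0, φ_m satisfies the recursion φ_m'(x) = 1/m − (x/m)·φ_{m+1}'(x). -/

import Mathlib

open Real MeasureTheory Filter ProbabilityTheory

/-- The digamma function psi(x) = Gamma'(x)/Gamma(x). -/
noncomputable def psi (x : ℝ) : ℝ := deriv Real.Gamma x / Real.Gamma x

/-- phi_m(x) = e^{-x} * sum_j (x^j/j!) psi(j+m). -/
noncomputable def phi (m x : ℝ) : ℝ :=
  Real.exp (-x) * ∑' j : ℕ, x ^ j / (Nat.factorial j : ℝ) * psi (j + m)

open Nat

/-!
Write `φ_m(x) = e^{-x} F_m(x)` with `F_m(x) = ∑ xʲ/j! · ψ(j + m)`. Since `ψ(j + m)` grows at most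
linearly in `j`, `F_m` may be differentiated termwise, which shifts the coefficients:
`F_m' = ∑ xʲ/j! · ψ(j + 1 + m)`. By `ψ(y + 1) = ψ(y) + 1/y` the product rule then gives
`φ_m' = e^{-x} S_m` with `S_m(x) = ∑ xʲ/(j! (j + m))`. The recursion amounts to
`m S_m + x S_{m+1} = eˣ`, which holds coefficientwise: `x S_{m+1}(x) = ∑ j xʲ/(j! (j + m))`.
-/

theorem psi_add_one {y : ℝ} (hy : ∀ n : ℕ, y ≠ -n) : psi (y + 1) = psi y + y⁻¹ := by
  have hy0 : y ≠ 0 := by simpa using hy 0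
  have hderiv : deriv Gamma (y + 1) = Gamma y + y * deriv Gamma y := by
    have hEq : (fun z => Gamma (z + 1)) =ᶠ[nhds y] fun z => z * Gamma z :=
      (eventually_ne_nhds hy0).mono fun z hz => Gamma_add_one hz
    rw [← deriv_comp_add_const, hEq.deriv_eq]
    have := ((hasDerivAt_id' y).mul (differentiableAt_Gamma hy).hasDerivAt).deriv
    rwa [one_mul] at this
  have hG : Gamma y ≠ 0 := Gamma_ne_zero hy
  rw [psi, psi, hderiv, Gamma_add_one hy0]
  field_simp
  ring

theorem psi_natCast_add_one_add {m : ℝ} (hm : 0 < m) (j : ℕ) :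
    psi ((j + 1 : ℕ) + m) = psi (j + m) + (j + m)⁻¹ := by
  rw [Nat.cast_succ, add_right_comm, psi_add_one fun n => by bound]

theorem abs_psi_natCast_add_le {m : ℝ} (hm : 0 < m) (j : ℕ) :
    |psi (j + m)| ≤ (|psi m| + m⁻¹) * 2 ^ j := by
  induction j with
  | zero => simp [hm.le]
  | succ n ih =>
    have hnm : 0 < (n : ℝ) + m := by positivity
    have hinv : ((n : ℝ) + m)⁻¹ ≤ (|psi m| + m⁻¹) * 2 ^ n := calc
      ((n : ℝ) + m)⁻¹ ≤ m⁻¹ := inv_anti₀ hm (by simp)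
      _ ≤ |psi m| + m⁻¹ := by simp
      _ ≤ (|psi m| + m⁻¹) * 2 ^ n := le_mul_of_one_le_right (by positivity) (one_le_pow₀ one_le_two)
    calc |psi ((n + 1 : ℕ) + m)| = |psi (n + m) + (n + m)⁻¹| := by rw [psi_natCast_add_one_add hm]
      _ ≤ |psi (n + m)| + ((n : ℝ) + m)⁻¹ := by
          simpa [abs_of_pos hnm] using abs_add_le (psi (n + m)) ((n : ℝ) + m)⁻¹
      _ ≤ (|psi m| + m⁻¹) * 2 ^ (n + 1) := by rw [pow_succ]; linarith

noncomputable def egf (a : ℕ → ℝ) (x : ℝ) : ℝ := ∑' j, x ^ j / j ! * a j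

def ExpBounded (a : ℕ → ℝ) : Prop := ∃ C K : ℝ, ∀ j, |a j| ≤ C * K ^ j

variable {a b : ℕ → ℝ}

namespace ExpBounded

theorem of_abs_le {C : ℝ} (h : ∀ j, |a j| ≤ C) : ExpBounded a :=
  ⟨C, 1, by simpa using h⟩

theorem shift (ha : ExpBounded a) : ExpBounded fun j => a (j + 1) := by
  obtain ⟨C, K, h⟩ := ha
  exact ⟨C * K, K, fun j => (h (j + 1)).trans_eq (by ring)⟩

theorem abs (ha : ExpBounded a) : ExpBounded fun j => |a j| := by
  obtain ⟨C, K, h⟩ := ha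
  exact ⟨C, K, by simpa using h⟩

theorem summable_egf (ha : ExpBounded a) (x : ℝ) : Summable fun j => x ^ j / j ! * a j := by
  obtain ⟨C, K, h⟩ := ha
  refine .of_norm_bounded ((Real.summable_pow_div_factorial (|x| * K)).mul_left C) fun j => ?_
  rw [Real.norm_eq_abs, abs_mul, abs_div, abs_pow, Nat.abs_cast]
  calc |x| ^ j / j ! * |a j| ≤ |x| ^ j / j ! * (C * K ^ j) := by gcongr; exact h j
    _ = C * ((|x| * K) ^ j / j !) := by ring

end ExpBounded

theorem hasDerivAt_pow_succ_div_factorial_mul (n : ℕ) (c y : ℝ) :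
    HasDerivAt (fun z => z ^ (n + 1) / (n + 1)! * c) (y ^ n / n ! * c) y := by
  refine (((hasDerivAt_pow (n + 1) y).div_const ((n + 1)! : ℝ)).mul_const c).congr_deriv ?_
  rw [Nat.factorial_succ]
  push_cast
  field_simp

theorem egf_eq_zero_add (ha : ExpBounded a) (x : ℝ) :
    egf a x = a 0 + ∑' j, x ^ (j + 1) / (j + 1)! * a (j + 1) := by
  rw [egf, (ha.summable_egf x).tsum_eq_zero_add]
  simp

theorem hasDerivAt_egf (ha : ExpBounded a) (x : ℝ) :
    HasDerivAt (egf a) (egf (fun j => a (j + 1)) x) x := by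
  rw [funext (egf_eq_zero_add ha)]
  refine .const_add _ ?_
  set R := |x| + 1
  refine hasDerivAt_tsum_of_isPreconnected (u := fun j => R ^ j / j ! * |a (j + 1)|)
    (ha.shift.abs.summable_egf R) Metric.isOpen_ball (convex_ball 0 R).isPreconnected
    (fun j y _ => hasDerivAt_pow_succ_div_factorial_mul j _ y) (fun j y hy => ?_)
    (mem_ball_zero_iff.2 (lt_add_one |x|)) ((summable_nat_add_iff 1).2 (ha.summable_egf x))
    (mem_ball_zero_iff.2 (lt_add_one |x|))
  rw [mem_ball_zero_iff, Real.norm_eq_abs] at hy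
  rw [norm_mul, norm_div, norm_pow, RCLike.norm_natCast, Real.norm_eq_abs, Real.norm_eq_abs]
  gcongr

theorem egf_sub (ha : ExpBounded a) (hb : ExpBounded b) (x : ℝ) :
    egf a x - egf b x = egf (fun j => a j - b j) x := by
  simp only [egf, mul_sub]
  exact ((ha.summable_egf x).tsum_sub (hb.summable_egf x)).symm

theorem egf_add (ha : ExpBounded a) (hb : ExpBounded b) (x : ℝ) :
    egf a x + egf b x = egf (fun j => a j + b j) x := by
  simp only [egf, mul_add]
  exact ((ha.summable_egf x).tsum_add (hb.summable_egf x)).symm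

theorem const_mul_egf (c : ℝ) (x : ℝ) : c * egf a x = egf (fun j => c * a j) x := by
  simp only [egf, ← tsum_mul_left]
  congr 1 with j
  ring

theorem egf_one (x : ℝ) : egf (fun _ => 1) x = exp x := by
  simp [egf, Real.exp_eq_exp_ℝ, NormedSpace.exp_eq_tsum_div]

theorem mul_egf_shift (ha : ExpBounded a) (x : ℝ) :
    x * egf (fun j => a (j + 1)) x = egf (fun j => j * a j) x := by
  have hterm : ∀ j : ℕ, x ^ (j + 1) / (j + 1)! * ((j + 1 : ℕ) * a (j + 1)) =
      x * (x ^ j / j ! * a (j + 1)) := fun j => by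
    rw [Nat.factorial_succ]
    push_cast
    field_simp
    ring
  symm
  rw [egf, egf, tsum_eq_zero_add' (by simpa only [hterm] using (ha.shift.summable_egf x).mul_left x)]
  simp only [hterm, tsum_mul_left, Nat.cast_zero, zero_mul, mul_zero, zero_add]

theorem expBounded_inv_natCast_add {m : ℝ} (hm : 0 < m) : ExpBounded fun j : ℕ => ((j : ℝ) + m)⁻¹ :=
  .of_abs_le fun j => by
    rw [abs_of_pos (by positivity)]
    exact inv_anti₀ hm (by simp)

theorem hasDerivAt_phi {m : ℝ} (hm : 0 < m) (x : ℝ) :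
    HasDerivAt (phi m) (exp (-x) * egf (fun j => ((j : ℝ) + m)⁻¹) x) x := by
  have hpsi : ExpBounded fun j : ℕ => psi (j + m) := ⟨_, 2, abs_psi_natCast_add_le hm⟩
  have hexp : HasDerivAt (fun y => exp (-y)) (-exp (-x)) x := by
    simpa using (hasDerivAt_neg x).exp
  refine (hexp.mul (hasDerivAt_egf hpsi x)).congr_deriv ?_
  rw [neg_mul, ← sub_eq_neg_add, ← mul_sub, egf_sub hpsi.shift hpsi]
  simp only [psi_natCast_add_one_add hm, add_sub_cancel_left]

theorem egf_inv_natCast_add_recursion {m : ℝ} (hm : 0 < m) (x : ℝ) :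
    m * egf (fun j => ((j : ℝ) + m)⁻¹) x + x * egf (fun j => ((j : ℝ) + (m + 1))⁻¹) x = exp x := by
  have hb := expBounded_inv_natCast_add hm
  have hshift : (fun j : ℕ => ((j : ℝ) + (m + 1))⁻¹) = fun j => (((j + 1 : ℕ) : ℝ) + m)⁻¹ := by
    ext j; push_cast; ring
  rw [hshift, mul_egf_shift hb, const_mul_egf, egf_add, ← egf_one]
  · congr 1 with j
    field_simp
    ring
  · refine .of_abs_le (C := 1) fun j => ?_
    rw [abs_of_pos (by positivity), ← div_eq_mul_inv, div_le_one (by positivity)]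
    simp
  · refine .of_abs_le (C := 1) fun j => ?_
    rw [abs_of_nonneg (by positivity), ← div_eq_mul_inv, div_le_one (by positivity)]
    linarith

theorem stmt3_general (m : ℝ) (hm : 0 < m) (x : ℝ) :
    deriv (phi m) x = 1 / m - (x / m) * deriv (phi (m + 1)) x := by
  rw [(hasDerivAt_phi hm x).deriv, (hasDerivAt_phi (by linarith) x).deriv]
  have hrec := egf_inv_natCast_add_recursion hm x
  set S := egf (fun j => ((j : ℝ) + m)⁻¹) x
  set T := egf (fun j => ((j : ℝ) + (m + 1))⁻¹) x
  have hexp : exp (-x) * exp x = 1 := by rw [← exp_add, neg_add_cancel, exp_zero]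
  field_simp
  linear_combination exp (-x) * hrec + hexp

theorem stmt3 (m : ℝ) (hm : 0 < m) (x : ℝ) (hx : 0 ≤ x) :
    deriv (phi m) x = 1 / m - (x / m) * deriv (phi (m + 1)) x :=
  stmt3_general m hm x
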